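/- Let k be a field, A and B k-algebras, and let (P, π) be a universal measuring coalgebra for the pair (A, B). If J ⊆ P is a coideal (i.e., a linear subspace with Δ(J) ⊆ J ⊗ P + P ⊗ J and ε(J) = 0) contained in the kernel of π, then J = 0. -/
import Mathlib


open TensorProduct

universe u

variable {k : Type u} [Field k]

section Aux

variable {P : Type u} [AddCommGroup P] [Module k P] [Coalgebra k P] (J : Submodule k P)

lemma mapq_comul_eq_zero
    (hΔ : ∀ x ∈ J, Coalgebra.comul (R := k) x ∈
      (LinearMap.range (TensorProduct.map J.subtype (LinearMap.id (M := P))) ⊔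
        LinearMap.range (TensorProduct.map (LinearMap.id (M := P)) J.subtype))) :
    ∀ x ∈ J, (TensorProduct.map J.mkQ J.mkQ) (Coalgebra.comul (R := k) x) = 0 := by
  intro x hx
  obtain ⟨y, hy, z, hz, hyz⟩ := Submodule.mem_sup.mp (hΔ x hx)
  obtain ⟨y', rfl⟩ := hy
  obtain ⟨z', rfl⟩ := hz
  have h1 : ∀ t : (J : Type u) ⊗[k] P,
      TensorProduct.map J.mkQ J.mkQ (TensorProduct.map J.subtype LinearMap.id t) = 0 := by
    intro t
    induction t using TensorProduct.induction_on with
    | zero => simp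
    | tmul a b =>
        have : (Submodule.Quotient.mk (a : P) : P ⧸ J) = 0 :=
          (Submodule.Quotient.mk_eq_zero J).mpr a.2
        simp [this]
    | add a b ha hb => simp [ha, hb]
  have h2 : ∀ t : P ⊗[k] (J : Type u),
      TensorProduct.map J.mkQ J.mkQ (TensorProduct.map LinearMap.id J.subtype t) = 0 := by
    intro t
    induction t using TensorProduct.induction_on with
    | zero => simp
    | tmul a b =>
        have : (Submodule.Quotient.mk (b : P) : P ⧸ J) = 0 :=
          (Submodule.Quotient.mk_eq_zero J).mpr b.2
        simp [this]
    | add a b ha hb => simp [ha, hb]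
  rw [← hyz, map_add, h1, h2, add_zero]

variable
    (hΔ : ∀ x ∈ J, Coalgebra.comul (R := k) x ∈
      (LinearMap.range (TensorProduct.map J.subtype (LinearMap.id (M := P))) ⊔
        LinearMap.range (TensorProduct.map (LinearMap.id (M := P)) J.subtype)))
    (hε : ∀ x ∈ J, Coalgebra.counit (R := k) x = 0)

/-- The comultiplication on the quotient. -/
noncomputable def qcomul : (P ⧸ J) →ₗ[k] (P ⧸ J) ⊗[k] (P ⧸ J) :=
  J.liftQ ((TensorProduct.map J.mkQ J.mkQ) ∘ₗ Coalgebra.comul)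
    (fun x hx => LinearMap.mem_ker.mpr (mapq_comul_eq_zero J hΔ x hx))

/-- The counit on the quotient. -/
noncomputable def qcounit : (P ⧸ J) →ₗ[k] k :=
  J.liftQ Coalgebra.counit (fun x hx => LinearMap.mem_ker.mpr (hε x hx))

@[simp] lemma qcomul_mkQ (p : P) :
    qcomul J hΔ (J.mkQ p) = TensorProduct.map J.mkQ J.mkQ (Coalgebra.comul (R := k) p) :=
  Submodule.liftQ_apply _ _ _

@[simp] lemma qcomul_mk (p : P) :
    qcomul J hΔ (Submodule.Quotient.mk p : P ⧸ J)
      = TensorProduct.map J.mkQ J.mkQ (Coalgebra.comul (R := k) p) :=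
  Submodule.liftQ_apply _ _ _

@[simp] lemma qcounit_mk (p : P) :
    qcounit J hε (Submodule.Quotient.mk p : P ⧸ J) = Coalgebra.counit (R := k) p :=
  Submodule.liftQ_apply _ _ _

@[simp] lemma qcounit_mkQ (p : P) :
    qcounit J hε (J.mkQ p) = Coalgebra.counit (R := k) p :=
  Submodule.liftQ_apply _ _ _

/-- The quotient coalgebra. -/
noncomputable def quotCoalgebra : Coalgebra k (P ⧸ J) where
  comul := qcomul J hΔ
  counit := qcounit J hε
  coassoc := by
    apply Submodule.linearMap_qext
    ext p
    have h1 : ∀ t : P ⊗[k] P,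
        (qcomul J hΔ).rTensor _ (TensorProduct.map J.mkQ J.mkQ t)
          = TensorProduct.map (TensorProduct.map J.mkQ J.mkQ) J.mkQ
              ((Coalgebra.comul (R := k)).rTensor P t) := by
      intro t
      induction t using TensorProduct.induction_on with
      | zero => simp
      | tmul x y => simp [LinearMap.rTensor_tmul]
      | add a b ha hb => simp [ha, hb]
    have h2 : ∀ t : P ⊗[k] P,
        (qcomul J hΔ).lTensor _ (TensorProduct.map J.mkQ J.mkQ t)
          = TensorProduct.map J.mkQ (TensorProduct.map J.mkQ J.mkQ)
              ((Coalgebra.comul (R := k)).lTensor P t) := by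
      intro t
      induction t using TensorProduct.induction_on with
      | zero => simp
      | tmul x y => simp [LinearMap.lTensor_tmul]
      | add a b ha hb => simp [ha, hb]
    simp only [LinearMap.comp_apply, Submodule.mkQ_apply]
    rw [qcomul_mk, h1, h2]
    simp only [LinearEquiv.coe_coe]
    rw [← TensorProduct.map_map_assoc, Coalgebra.coassoc_apply]
  rTensor_counit_comp_comul := by
    apply Submodule.linearMap_qext
    ext p
    have h1 : ∀ t : P ⊗[k] P,
        (qcounit J hε).rTensor _ (TensorProduct.map J.mkQ J.mkQ t)
          = (J.mkQ).lTensor k ((Coalgebra.counit (R := k)).rTensor P t) := by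
      intro t
      induction t using TensorProduct.induction_on with
      | zero => simp
      | tmul x y => simp [LinearMap.rTensor_tmul]
      | add a b ha hb => simp [ha, hb]
    simp only [LinearMap.comp_apply, Submodule.mkQ_apply]
    rw [qcomul_mk, h1, Coalgebra.rTensor_counit_comul]
    simp
  lTensor_counit_comp_comul := by
    apply Submodule.linearMap_qext
    ext p
    have h1 : ∀ t : P ⊗[k] P,
        (qcounit J hε).lTensor _ (TensorProduct.map J.mkQ J.mkQ t)
          = (J.mkQ).rTensor k ((Coalgebra.counit (R := k)).lTensor P t) := by
      intro t
      induction t using TensorProduct.induction_on with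
      | zero => simp
      | tmul x y => simp [LinearMap.lTensor_tmul]
      | add a b ha hb => simp [ha, hb]
    simp only [LinearMap.comp_apply, Submodule.mkQ_apply]
    rw [qcomul_mk, h1, Coalgebra.lTensor_counit_comul]
    simp

end Aux


/-- The convolution product on `C →ₗ[k] B` for a coalgebra `C` and algebra `B`:
`(f * g)(c) = Σ f(c₍₁₎) g(c₍₂₎)`. -/
noncomputable def conv {C B : Type u} [AddCommGroup C] [Module k C] [Coalgebra k C]
    [Ring B] [Algebra k B] (f g : C →ₗ[k] B) : C →ₗ[k] B :=
  (TensorProduct.lift ((LinearMap.mul k B).compl₁₂ f g)) ∘ₗ Coalgebra.comul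

/-- `σ : C →ₗ[k] Hom(A,B)` is a measuring map if
`σ(c)(a a') = Σ σ(c₍₁₎)(a) σ(c₍₂₎)(a')` and `σ(c)(1) = ε(c) 1`. -/
noncomputable def IsMeasuring {C A B : Type u} [AddCommGroup C] [Module k C] [Coalgebra k C]
    [Ring A] [Algebra k A] [Ring B] [Algebra k B]
    (σ : C →ₗ[k] A →ₗ[k] B) : Prop :=
  (∀ (c : C) (a a' : A), σ c (a * a') = conv (σ.flip a) (σ.flip a') c) ∧
  (∀ c : C, σ c (1 : A) = (Coalgebra.counit (R := k) c) • (1 : B))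

/-- `(P, π)` is a universal measuring coalgebra for the pair `(A, B)`. -/
noncomputable def IsUniversalMeasuring {A B : Type u} [Ring A] [Algebra k A]
    [Ring B] [Algebra k B]
    (P : Type u) [AddCommGroup P] [Module k P] [Coalgebra k P]
    (π : P →ₗ[k] A →ₗ[k] B) : Prop :=
  IsMeasuring π ∧
  ∀ (C : Type u) [AddCommGroup C] [Module k C] [Coalgebra k C]
    (σ : C →ₗ[k] A →ₗ[k] B), IsMeasuring σ →
      ∃! ρ : C →ₗc[k] P, π ∘ₗ (ρ : C →ₗ[k] P) = σ

/-- If `(P, π)` is a universal measuring coalgebra for `(A, B)` and `J ⊆ P` is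
a coideal (i.e. `Δ(J) ⊆ J ⊗ P + P ⊗ J` and `ε(J) = 0`) contained in the kernel of `π`, then
`J = 0`. -/
theorem coideal_in_ker_of_universal_measuring_eq_bot
    (A B : Type u) [Ring A] [Algebra k A] [Ring B] [Algebra k B]
    (P : Type u) [AddCommGroup P] [Module k P] [Coalgebra k P]
    (π : P →ₗ[k] A →ₗ[k] B)
    (h : IsUniversalMeasuring P π)
    (J : Submodule k P)
    (hΔ : ∀ x ∈ J, Coalgebra.comul (R := k) x ∈
      (LinearMap.range (TensorProduct.map J.subtype (LinearMap.id (M := P))) ⊔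
        LinearMap.range (TensorProduct.map (LinearMap.id (M := P)) J.subtype)))
    (hε : ∀ x ∈ J, Coalgebra.counit (R := k) x = 0)
    (hker : ∀ x ∈ J, π x = 0) :
    J = ⊥ := by
  letI instQ : Coalgebra k (P ⧸ J) := quotCoalgebra J hΔ hε
  have hcomulQ : (Coalgebra.comul (R := k) (A := P ⧸ J)) = qcomul J hΔ := rfl
  have hcounitQ : (Coalgebra.counit (R := k) (A := P ⧸ J)) = qcounit J hε := rfl
  -- the induced map on the quotient
  set σ : (P ⧸ J) →ₗ[k] A →ₗ[k] B :=
    J.liftQ π (fun x hx => LinearMap.mem_ker.mpr (hker x hx)) with hσdef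
  have hσq : ∀ p : P, σ (J.mkQ p) = π p := fun p => Submodule.liftQ_apply _ _ _
  have hσmk : ∀ p : P, σ (Submodule.Quotient.mk p : P ⧸ J) = π p := hσq
  have hσ : IsMeasuring σ := by
    constructor
    · intro c a a'
      obtain ⟨p, rfl⟩ := J.mkQ_surjective c
      rw [hσq]
      rw [(h.1).1 p a a']
      show _ = TensorProduct.lift ((LinearMap.mul k B).compl₁₂ (σ.flip a) (σ.flip a'))
        (Coalgebra.comul (R := k) (J.mkQ p))
      rw [hcomulQ, qcomul_mkQ]
      show TensorProduct.lift ((LinearMap.mul k B).compl₁₂ (π.flip a) (π.flip a'))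
        (Coalgebra.comul (R := k) p) = _
      generalize (Coalgebra.comul (R := k) p) = t
      induction t using TensorProduct.induction_on with
      | zero => simp
      | tmul x y => simp [hσmk]
      | add u v hu hv => simp [hu, hv]
    · intro c
      obtain ⟨p, rfl⟩ := J.mkQ_surjective c
      rw [hσq, (h.1).2 p, hcounitQ, qcounit_mkQ]
  obtain ⟨ρ, hρ, -⟩ := h.2 (P ⧸ J) σ hσ
  obtain ⟨ρ₀, hρ₀, huniq⟩ := h.2 P π h.1
  -- the quotient map as a coalgebra homomorphism
  let qhat : P →ₗc[k] (P ⧸ J) :=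
    { toLinearMap := J.mkQ
      counit_comp := J.liftQ_mkQ _ _
      map_comp_comul := (J.liftQ_mkQ _ _).symm }
  have h1 : ρ.comp qhat = CoalgHom.id k P := by
    have e1 : π ∘ₗ ((ρ.comp qhat : P →ₗc[k] P) : P →ₗ[k] P) = π := by
      have : ((ρ.comp qhat : P →ₗc[k] P) : P →ₗ[k] P) = (ρ : (P ⧸ J) →ₗ[k] P) ∘ₗ J.mkQ := rfl
      rw [this, ← LinearMap.comp_assoc, hρ]
      exact J.liftQ_mkQ _ _
    have e2 : π ∘ₗ ((CoalgHom.id k P : P →ₗc[k] P) : P →ₗ[k] P) = π := by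
      ext p; rfl
    rw [huniq _ e1, huniq _ e2]
  rw [eq_bot_iff]
  intro x hx
  have hq0 : J.mkQ x = 0 := by
    simpa [Submodule.Quotient.mk_eq_zero] using hx
  have := DFunLike.congr_fun h1 x
  simp only [CoalgHom.comp_apply, CoalgHom.id_apply] at this
  rw [show qhat x = J.mkQ x from rfl, hq0, map_zero] at this
  simp [← this]
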